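/- arXiv:1310.5616 — 2 statements merged into one kernel-verified Lean document; each statement's English description precedes it below -/
import Mathlib

section
/- Let N = q^k·n^2 be an odd perfect number given in Eulerian form. Then I(q^k) < 2^(1/3) < I(n), where I(x) = σ(x)/x is the abundancy index. -/
/-- The abundancy index `I(x) = σ(x)/x`, as a real number. -/
noncomputable def abundancy (x : ℕ) : ℝ := (ArithmeticFunction.sigma 1 x : ℝ) / x

/-!
Since `q ≥ 5`, `I(q^k) < q/(q-1) ≤ 5/4 < 2^(1/3)`. Perfection and multiplicativity give
`I(q^k) I(n²) = 2`, so `I(n²) > 8/5 > 2^(2/3)`; as `σ` is submultiplicative,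
`I(n)² ≥ I(n²)`, whence `I(n) > 2^(1/3)`.
-/

open ArithmeticFunction Finset
open scoped ArithmeticFunction.sigma

theorem sigma_one_mul_le (m n : ℕ) : σ 1 (m * n) ≤ σ 1 m * σ 1 n := by
  rw [sigma_one_apply, sigma_one_apply, sigma_one_apply, Nat.divisors_mul, Finset.mul_def,
    Finset.sum_mul_sum, ← Finset.sum_product']
  exact Finset.sum_image_le_of_nonneg fun _ _ => Nat.zero_le _

theorem abundancy_nonneg (n : ℕ) : 0 ≤ abundancy n := by
  unfold abundancy
  positivity

theorem abundancy_mul_le (m n : ℕ) : abundancy (m * n) ≤ abundancy m * abundancy n := by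
  unfold abundancy
  rw [div_mul_div_comm, Nat.cast_mul]
  gcongr
  exact_mod_cast sigma_one_mul_le m n

theorem abundancy_mul_of_coprime {m n : ℕ} (h : m.Coprime n) :
    abundancy (m * n) = abundancy m * abundancy n := by
  unfold abundancy
  rw [isMultiplicative_sigma.map_mul_of_coprime h]
  push_cast
  rw [div_mul_div_comm]

theorem abundancy_eq_two_of_perfect {n : ℕ} (h : n.Perfect) : abundancy n = 2 := by
  have hn : (0 : ℝ) < n := by exact_mod_cast h.2
  unfold abundancy
  rw [div_eq_iff hn.ne', sigma_one_apply]
  exact_mod_cast (Nat.perfect_iff_sum_divisors_eq_two_mul h.2).mp h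

theorem abundancy_prime_pow_lt {p : ℕ} (hp : p.Prime) (k : ℕ) :
    abundancy (p ^ k) < p / (p - 1) := by
  have hp1 : (1 : ℝ) < p := by exact_mod_cast hp.one_lt
  have hσ : (σ 1 (p ^ k) : ℝ) * (p - 1) = p ^ (k + 1) - 1 := by
    rw [sigma_one_apply_prime_pow hp]
    push_cast
    exact geom_sum_mul _ _
  unfold abundancy
  rw [Nat.cast_pow, div_lt_div_iff₀ (by positivity) (by linarith), hσ, pow_succ]
  linarith

theorem two_rpow_one_third_pow_three : ((2 : ℝ) ^ ((1 : ℝ) / 3)) ^ 3 = 2 := by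
  rw [← Real.rpow_natCast, ← Real.rpow_mul (by norm_num)]
  norm_num

theorem five_div_four_lt_two_rpow_one_third : (5 : ℝ) / 4 < (2 : ℝ) ^ ((1 : ℝ) / 3) :=
  lt_of_pow_lt_pow_left₀ 3 (by positivity) (by rw [two_rpow_one_third_pow_three]; norm_num)

theorem two_rpow_one_third_sq_lt : ((2 : ℝ) ^ ((1 : ℝ) / 3)) ^ 2 < 8 / 5 := by
  refine lt_of_pow_lt_pow_left₀ 3 (by norm_num) ?_
  rw [← pow_mul, mul_comm, pow_mul, two_rpow_one_third_pow_three]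
  norm_num

theorem stmt_11_general (q k n : ℕ) (hq : q.Prime) (hq1 : q % 4 = 1)
    (hgcd : Nat.gcd q n = 1)
    (hperf : Nat.Perfect (q ^ k * n ^ 2)) :
    abundancy (q ^ k) < (2 : ℝ) ^ ((1 : ℝ) / 3) ∧
    (2 : ℝ) ^ ((1 : ℝ) / 3) < abundancy n := by
  have hq5 : (5 : ℝ) ≤ q := by
    have := hq.two_le
    exact_mod_cast (by omega : 5 ≤ q)
  have hqk : abundancy (q ^ k) < 5 / 4 := (abundancy_prime_pow_lt hq k).trans_le <| by
    rw [div_le_div_iff₀ (by linarith) (by norm_num)]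
    linarith
  refine ⟨hqk.trans five_div_four_lt_two_rpow_one_third, ?_⟩
  have h2 : 2 ≤ abundancy (q ^ k) * abundancy n ^ 2 :=
    calc 2 = abundancy (q ^ k * n ^ 2) := (abundancy_eq_two_of_perfect hperf).symm
      _ = abundancy (q ^ k) * abundancy (n ^ 2) := abundancy_mul_of_coprime (Nat.Coprime.pow k 2 hgcd)
      _ ≤ abundancy (q ^ k) * abundancy n ^ 2 := by
        gcongr
        · exact abundancy_nonneg _
        · simpa only [sq] using abundancy_mul_le n n
  have hn : 8 / 5 < abundancy n ^ 2 := by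
    nlinarith [abundancy_nonneg (q ^ k), abundancy_nonneg n]
  exact lt_of_pow_lt_pow_left₀ 2 (abundancy_nonneg n) (two_rpow_one_third_sq_lt.trans hn)

/-- For an odd perfect number `N = q^k * n^2` in Eulerian form,
`I(q^k) < 2^(1/3) < I(n)`. -/
theorem stmt_11 (q k n : ℕ) (hq : q.Prime) (hq1 : q % 4 = 1) (hk1 : k % 4 = 1)
    (hgcd : Nat.gcd q n = 1) (hodd : Odd (q ^ k * n ^ 2))
    (hperf : Nat.Perfect (q ^ k * n ^ 2)) :
    abundancy (q ^ k) < (2 : ℝ) ^ ((1 : ℝ) / 3) ∧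
    (2 : ℝ) ^ ((1 : ℝ) / 3) < abundancy n :=
  stmt_11_general q k n hq hq1 hgcd hperf
end

section
/- Let N = q^k·n^2 be an odd perfect number given in Eulerian form. If n < q, then k = 1. -/
/-!
If `k ≥ 3`, then `σ(q^k)` is prime to `q`, so perfection `σ(q^k) σ(n²) = 2 q^k n²` forces
`σ(q^k) ∣ 2n²`, whence `q^k < σ(q^k) ≤ 2n² < 2q² ≤ q³ ≤ q^k`.
-/

open ArithmeticFunction Finset
open scoped ArithmeticFunction.sigma

theorem Nat.lt_sigma_one {m : ℕ} (hm : 1 < m) : m < σ 1 m := by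
  rw [sigma_one_apply, Nat.sum_divisors_eq_sum_properDivisors_add_self, Nat.lt_add_left_iff_pos]
  exact single_le_sum (f := fun i ↦ i) (fun _ _ ↦ Nat.zero_le _)
    (Nat.one_mem_properDivisors_iff_one_lt.2 hm)

namespace Nat.Prime

theorem sigma_one_pow_eq_mul_add_one {p : ℕ} (hp : p.Prime) (k : ℕ) :
    σ 1 (p ^ k) = p * ∑ j ∈ range k, p ^ j + 1 := by
  rw [sigma_one_apply_prime_pow hp, sum_range_succ', mul_sum]
  simp only [pow_succ', pow_zero]

theorem coprime_sigma_one_pow {p : ℕ} (hp : p.Prime) (k : ℕ) : Coprime (σ 1 (p ^ k)) p := by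
  rw [hp.sigma_one_pow_eq_mul_add_one, Nat.coprime_comm, mul_comm,
    Nat.coprime_mul_right_add_right]
  exact Nat.coprime_one_right p

end Nat.Prime

theorem Nat.Perfect.sigma_one_dvd_two_mul {a b : ℕ} (h : Perfect (a * b)) (hab : Coprime a b)
    (ha : Coprime (σ 1 a) a) : σ 1 a ∣ 2 * b := by
  have hσ : σ 1 a * σ 1 b = a * (2 * b) := by
    rw [← isMultiplicative_sigma.map_mul_of_coprime hab, sigma_one_apply,
      (Nat.perfect_iff_sum_divisors_eq_two_mul h.2).1 h]
    ring
  exact ha.dvd_of_dvd_mul_left (Dvd.intro _ hσ)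

theorem Nat.Perfect.prime_pow_lt_two_mul {q k m : ℕ} (h : Perfect (q ^ k * m)) (hq : q.Prime)
    (hk : k ≠ 0) (hqm : Coprime q m) : q ^ k < 2 * m := by
  have hm : 0 < m := Nat.pos_of_mul_pos_left h.2
  calc q ^ k < σ 1 (q ^ k) := Nat.lt_sigma_one (Nat.one_lt_pow hk hq.one_lt)
    _ ≤ 2 * m := Nat.le_of_dvd (by positivity) <|
      h.sigma_one_dvd_two_mul (hqm.pow_left k) ((hq.coprime_sigma_one_pow k).pow_right k)

theorem stmt_16_general (q k n : ℕ) (hq : q.Prime) (hk1 : k % 4 = 1)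
    (hgcd : Nat.gcd q n = 1)
    (hperf : Nat.Perfect (q ^ k * n ^ 2)) (hlt : n < q) :
    k = 1 := by
  have hk : k < 3 := by
    refine (Nat.pow_lt_pow_iff_right hq.one_lt).1 ?_
    calc q ^ k < 2 * n ^ 2 :=
          hperf.prime_pow_lt_two_mul hq (by omega) (Nat.Coprime.pow_right 2 hgcd)
      _ < 2 * q ^ 2 := by gcongr
      _ ≤ q ^ 3 := by rw [pow_succ' q 2]; exact Nat.mul_le_mul_right _ hq.two_le
  omega

/-- For an odd perfect number `N = q^k * n^2` in Eulerian form,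
if `n < q` then `k = 1`. -/
theorem stmt_16 (q k n : ℕ) (hq : q.Prime) (hq1 : q % 4 = 1) (hk1 : k % 4 = 1)
    (hgcd : Nat.gcd q n = 1) (hodd : Odd (q ^ k * n ^ 2))
    (hperf : Nat.Perfect (q ^ k * n ^ 2)) (hlt : n < q) :
    k = 1 :=
  stmt_16_general q k n hq hk1 hgcd hperf hlt
end
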